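/- arXiv:2301.07747 — 2 statements merged into one kernel-verified Lean document; each statement's English description precedes it below -/
import Mathlib

section
/- Consider full binary trees of height n with leaves labeled by ℂ, viewed as functions {0,1}^n → ℂ. For every n ≥ 1, the set S_n = { e_j : j ∈ {0,1}^n }, where e_j(j) = 1 and e_j(i) = 0 for i ≠ j (the set of all computational basis states), has cardinality 2^n, and there exists a nondeterministic top-down tree automaton with 2n+1 states and 3n+1 transitions whose language is exactly S_n. -/
/-- A nondeterministic top-down tree automaton on full binary trees of height `n`
with leaves labeled by ℂ. Internal transitions `(q, k, q₀, q₁)` read the level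
symbol `x_k` (levels `1,…,n`, determined by the depth of the node); leaf
transitions `(q, s)` read the leaf symbol `s ∈ {0,1}` (interpreted in ℂ). -/
structure NTA (n : ℕ) where
  Q : Type
  [fin : Fintype Q]
  root : Finset Q
  Δi : Finset (Q × ℕ × Q × Q)
  Δl : Finset (Q × Bool)

/-- A tree (a function `{0,1}^n → ℂ` giving the leaf labels) is accepted if
there is a run `ρ` labeling each node (a path, i.e., a list of branch choices)
with a state, starting from a root state, consistent with the internal
transitions at internal nodes and with the leaf transitions at leaves. -/
def NTA.accepts {n : ℕ} (A : NTA n) (T : (Fin n → Bool) → ℂ) : Prop :=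
  ∃ ρ : List Bool → A.Q,
    ρ [] ∈ A.root ∧
    (∀ l : List Bool, l.length < n →
      (ρ l, l.length + 1, ρ (l ++ [false]), ρ (l ++ [true])) ∈ A.Δi) ∧
    (∀ l : List Bool, l.length = n →
      ∃ s : Bool, (ρ l, s) ∈ A.Δl ∧
        T (fun i => l.getD i.val false) = (if s then (1 : ℂ) else 0))

/-!
The automaton guesses the path to the unique leaf labelled `1`: a node at depth `k` is in
state `p_k` (`pathState`) if it lies on that path and in state `z_k` (`zeroState`) otherwise.
A `p`-node has one `p`-child and one `z`-child (two transitions per level, one for each side),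
a `z`-node has only `z`-children (one transition per level `k ≥ 1`), and at the leaves `p_n`
reads `1` and `z_n` reads `0`: `2n + 1` states and `2n + (n - 1) + 2 = 3n + 1` transitions.
Conversely, by induction on the depth, every run has exactly one `p`-node on each level, so an
accepted tree has exactly one leaf labelled `1`.
-/

theorem ncard_basisVectors {ι R : Type*} [DecidableEq ι] [Zero R] [One R]
    [NeZero (1 : R)] :
    {T : ι → R | ∃ j : ι, T = fun i => if i = j then 1 else 0}.ncard = Nat.card ι := by
  have hinj : Function.Injective fun j : ι => fun i : ι => if i = j then (1 : R) else 0 := by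
    intro a b h
    simpa using congrFun h a
  rw [← Set.ncard_range_of_injective hinj]
  simp only [Set.range, eq_comm]

theorem List.getD_fun_eq_iff_eq_ofFn {α : Type*} {n : ℕ} {l : List α} (d : α)
    (hl : l.length = n) (f : Fin n → α) :
    (fun i : Fin n => l.getD i d) = f ↔ l = List.ofFn f := by
  subst hl
  have hgetD : (fun i : Fin l.length => l.getD i d) = fun i => l[i] :=
    funext fun i => List.getD_eq_getElem _ _ i.isLt
  rw [hgetD, ← List.ofFn_inj]
  simp

theorem List.append_singleton_prefix_iff {α : Type*} {l l' : List α} {a : α}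
    (h : l.length < l'.length) : l ++ [a] <+: l' ↔ l <+: l' ∧ l'[l.length] = a := by
  constructor
  · intro hpre
    refine ⟨(List.prefix_append l [a]).trans hpre, ?_⟩
    rw [← hpre.getElem (by simp)]
    simp
  · rintro ⟨hpre, rfl⟩
    have htake : l ++ [l'[l.length]] = l'.take (l.length + 1) := by
      rw [← List.take_concat_get' _ _ h, ← List.prefix_iff_eq_take.mp hpre]
    exact htake ▸ List.take_prefix _ _

namespace BasisStateTA

variable {n : ℕ}

/-- `pathState n k` labels the node at depth `k` on the path to the leaf carrying `1`,
`zeroState n k` a node at depth `k ≥ 1` off that path; the `min` only makes the maps total. -/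
def pathState (n k : ℕ) : Fin (2 * n + 1) := ⟨min k n, by omega⟩

def zeroState (n k : ℕ) : Fin (2 * n + 1) := ⟨n + min k n, by omega⟩

theorem pathState_ne_zeroState (hn : 1 ≤ n) (k : ℕ) {k' : ℕ} (hk' : 1 ≤ k') :
    pathState n k ≠ zeroState n k' := by
  simp only [pathState, zeroState, ne_eq, Fin.mk.injEq]
  omega

abbrev automaton (n : ℕ) : NTA n where
  Q := Fin (2 * n + 1)
  root := {pathState n 0}
  Δi := ((Finset.range n).image fun k =>
          (pathState n k, k + 1, pathState n (k + 1), zeroState n (k + 1))) ∪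
        ((Finset.range n).image fun k =>
          (pathState n k, k + 1, zeroState n (k + 1), pathState n (k + 1))) ∪
        ((Finset.Ico 1 n).image fun k =>
          (zeroState n k, k + 1, zeroState n (k + 1), zeroState n (k + 1)))
  Δl := {(pathState n n, true), (zeroState n n, false)}

theorem card_transitions (hn : 1 ≤ n) :
    (automaton n).Δi.card + (automaton n).Δl.card = 3 * n + 1 := by
  have hne := pathState_ne_zeroState hn
  have hinj {f g h : ℕ → Fin (2 * n + 1)} :
      Function.Injective fun k => (f k, k + 1, g (k + 1), h (k + 1)) := fun a b hab => by
    simpa using congrArg (·.2.1) hab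
  rw [Finset.card_union_of_disjoint, Finset.card_union_of_disjoint,
    Finset.card_image_of_injective _ hinj, Finset.card_image_of_injective _ hinj,
    Finset.card_image_of_injective _ hinj, Finset.card_pair]
  · simp only [Finset.card_range, Nat.card_Ico]
    omega
  · simp
  · simp only [Finset.disjoint_left, Finset.mem_image, Finset.mem_range]
    rintro _ ⟨a, -, rfl⟩ ⟨b, -, hba⟩
    simp only [Prod.mk.injEq] at hba
    obtain ⟨-, hba, hz, -⟩ := hba
    obtain rfl : b = a := by omega
    exact hne (b + 1) le_add_self hz.symm
  · simp only [Finset.disjoint_left, Finset.mem_union, Finset.mem_image, Finset.mem_Ico]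
    rintro _ (⟨a, -, rfl⟩ | ⟨a, -, rfl⟩) ⟨b, hb, hba⟩ <;>
      exact hne a hb.1 (congrArg Prod.fst hba).symm

theorem mem_internal_iff {q a b : Fin (2 * n + 1)} {k : ℕ} :
    (q, k + 1, a, b) ∈ (automaton n).Δi ↔ k < n ∧
      (q = pathState n k ∧ a = pathState n (k + 1) ∧ b = zeroState n (k + 1) ∨
        q = pathState n k ∧ a = zeroState n (k + 1) ∧ b = pathState n (k + 1) ∨
        1 ≤ k ∧ q = zeroState n k ∧ a = zeroState n (k + 1) ∧ b = zeroState n (k + 1)) := by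
  simp only [automaton, Finset.mem_union, Finset.mem_image, Finset.mem_range, Finset.mem_Ico,
    Prod.mk.injEq, add_left_inj]
  aesop

theorem mem_leaf_iff (hn : 1 ≤ n) (c : Prop) [Decidable c] (s : Bool) :
    ((if c then pathState n n else zeroState n n), s) ∈ (automaton n).Δl ↔
      (s = true ↔ c) := by
  have hne := pathState_ne_zeroState hn n hn
  by_cases hc : c <;> simp [automaton, hc, hne, hne.symm]

theorem exists_path_of_run (hn : 1 ≤ n) {ρ : List Bool → Fin (2 * n + 1)}
    (hroot : ρ [] = pathState n 0)
    (hint : ∀ l : List Bool, l.length < n →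
      (ρ l, l.length + 1, ρ (l ++ [false]), ρ (l ++ [true])) ∈ (automaton n).Δi)
    {k : ℕ} (hk : k ≤ n) : ∃ P : List Bool, P.length = k ∧
      ∀ l : List Bool, l.length = k →
        ρ l = if l = P then pathState n k else zeroState n k := by
  induction k with
  | zero =>
    refine ⟨[], rfl, fun l hl => ?_⟩
    rw [List.length_eq_zero_iff.mp hl, if_pos rfl, hroot]
  | succ k ih =>
    obtain ⟨P, hPlen, hρ⟩ := ih (by omega)
    have hρP : ρ P = pathState n k := by rw [hρ P hPlen, if_pos rfl]
    obtain ⟨c, hc⟩ : ∃ c : Bool, ∀ b,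
        ρ (P ++ [b]) = if b = c then pathState n (k + 1) else zeroState n (k + 1) := by
      have hstep := hint P (by omega)
      rw [hPlen, mem_internal_iff, hρP] at hstep
      rcases hstep with ⟨-, ⟨-, h0, h1⟩ | ⟨-, h0, h1⟩ | ⟨hk1, hz, -⟩⟩
      · exact ⟨false, by simp [h0, h1]⟩
      · exact ⟨true, by simp [h0, h1]⟩
      · exact absurd hz (pathState_ne_zeroState hn k hk1)
    refine ⟨P ++ [c], by simp [hPlen], fun l hl => ?_⟩
    obtain ⟨l, b, rfl⟩ := (List.eq_nil_or_concat' l).resolve_left (by rintro rfl; simp at hl)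
    have hl : l.length = k := by simpa using hl
    by_cases hP : l = P
    · subst hP
      simp [hc]
    · have hk1 : 1 ≤ k := Nat.pos_of_ne_zero fun hk0 => hP <| by
        rw [List.length_eq_zero_iff.mp (hl.trans hk0),
          List.length_eq_zero_iff.mp (hPlen.trans hk0)]
      have hstep := hint l (by omega)
      rw [hl, mem_internal_iff, hρ l hl, if_neg hP] at hstep
      rcases hstep with ⟨-, ⟨hp, -⟩ | ⟨hp, -⟩ | ⟨-, -, h0, h1⟩⟩
      · exact absurd hp.symm (pathState_ne_zeroState hn k hk1)
      · exact absurd hp.symm (pathState_ne_zeroState hn k hk1)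
      · rw [if_neg (by simp [hP])]
        cases b
        exacts [h0, h1]

theorem accepts_basisState (hn : 1 ≤ n) (j : Fin n → Bool) :
    (automaton n).accepts fun i => if i = j then 1 else 0 := by
  refine ⟨fun l => if l <+: List.ofFn j then pathState n l.length else zeroState n l.length,
    by simp, fun l hl => ?_, fun l hl => ?_⟩
  · have hchild (b : Bool) :
        l ++ [b] <+: List.ofFn j ↔ l <+: List.ofFn j ∧ j ⟨l.length, hl⟩ = b := by
      rw [List.append_singleton_prefix_iff (by simpa using hl), List.getElem_ofFn]
    dsimp only
    simp only [List.length_append, List.length_singleton, hchild]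
    by_cases hpre : l <+: List.ofFn j
    · cases j ⟨l.length, hl⟩ <;> simp [hpre, hl]
    · have hl1 : 1 ≤ l.length :=
        List.length_pos_iff.mpr (by rintro rfl; exact hpre List.nil_prefix)
      simp [hpre, hl, hl1]
  · have hpre : l <+: List.ofFn j ↔ l = List.ofFn j :=
      ⟨fun h => h.eq_of_length (by simp [hl]), fun h => h ▸ List.prefix_refl _⟩
    refine ⟨decide (l = List.ofFn j), ?_, ?_⟩
    · simpa [hl, hpre] using (mem_leaf_iff hn (l = List.ofFn j) _).mpr decide_eq_true_iff
    · simp only [List.getD_fun_eq_iff_eq_ofFn false hl, decide_eq_true_eq]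

theorem exists_eq_basisState_of_accepts (hn : 1 ≤ n) {T : (Fin n → Bool) → ℂ}
    (hT : (automaton n).accepts T) :
    ∃ j : Fin n → Bool, T = fun i => if i = j then 1 else 0 := by
  obtain ⟨ρ, hroot, hint, hleaf⟩ := hT
  obtain ⟨P, hPlen, hρ⟩ := exists_path_of_run hn (Finset.mem_singleton.mp hroot) hint le_rfl
  refine ⟨fun i => P.getD i false, funext fun i => ?_⟩
  obtain ⟨s, hs, hTs⟩ := hleaf (List.ofFn i) List.length_ofFn
  rw [hρ _ List.length_ofFn, mem_leaf_iff hn] at hs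
  rw [(List.getD_fun_eq_iff_eq_ofFn false List.length_ofFn i).mpr rfl] at hTs
  have hij : i = (fun k : Fin n => P.getD k false) ↔ List.ofFn i = P := by
    rw [eq_comm, List.getD_fun_eq_iff_eq_ofFn false hPlen, eq_comm]
  simp only [hTs, hs, hij]

end BasisStateTA

open BasisStateTA in
theorem basis_states_linear_TA (n : ℕ) (hn : 1 ≤ n) :
    Set.ncard {T : (Fin n → Bool) → ℂ |
        ∃ j : Fin n → Bool, T = fun i => if i = j then (1 : ℂ) else 0} = 2 ^ n ∧
    ∃ A : NTA n,
      @Fintype.card A.Q A.fin = 2 * n + 1 ∧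
      A.Δi.card + A.Δl.card = 3 * n + 1 ∧
      ∀ T : (Fin n → Bool) → ℂ,
        A.accepts T ↔ ∃ j : Fin n → Bool, T = fun i => if i = j then (1 : ℂ) else 0 := by
  refine ⟨?_, automaton n, Fintype.card_fin _, card_transitions hn,
    fun T => ⟨exists_eq_basisState_of_accepts hn, ?_⟩⟩
  · rw [ncard_basisVectors]
    simp
  · rintro ⟨j, rfl⟩
    exact accepts_basisState hn j
end

section
/- Let A be a tree automaton on full binary trees in which every internal transition carries a unique symbol and every leaf transition has a unique parent state (i.e., leaf transitions q → c and q' → c' with c ≠ c' satisfy q ≠ q'). Then any two trees accepted by A that have the same tag (the tree obtained by replacing all leaf labels with a fixed symbol □, keeping internal labels) and that are not single-valued are equal. -/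
/-- Full binary trees with internal labels in `σ` and leaf labels in `C`. -/
inductive BTree (σ C : Type) : Type
  | leaf (c : C)
  | node (s : σ) (l r : BTree σ C)

/-- The tag of a tree: replace every leaf label by the fixed symbol `□ = ()`. -/
def BTree.tag {σ C : Type} : BTree σ C → BTree σ Unit
  | .leaf _ => .leaf ()
  | .node s l r => .node s l.tag r.tag

/-- The set of constant (leaf) symbols occurring in a tree. -/
def BTree.leafSet {σ C : Type} : BTree σ C → Set C
  | .leaf c => {c}
  | .node _ l r => l.leafSet ∪ r.leafSet

/-- A tree is single-valued if it contains only one constant symbol. -/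
def BTree.SingleValued {σ C : Type} (T : BTree σ C) : Prop :=
  ∃ c : C, T.leafSet ⊆ {c}

/-- A (nondeterministic) tree automaton on binary trees. -/
structure TA (Q σ C : Type) where
  root : Set Q
  Δi : Set (Q × σ × Q × Q)
  Δl : Set (Q × C)

/-- `A.Reach q T`: there is a run of `A` on `T` whose root is labeled `q`. -/
inductive TA.Reach {Q σ C : Type} (A : TA Q σ C) : Q → BTree σ C → Prop
  | leaf {q : Q} {c : C} : (q, c) ∈ A.Δl → TA.Reach A q (.leaf c)
  | node {q q₀ q₁ : Q} {s : σ} {l r : BTree σ C} :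
      (q, s, q₀, q₁) ∈ A.Δi → TA.Reach A q₀ l → TA.Reach A q₁ r →
      TA.Reach A q (.node s l r)

/-- A tree is accepted if it has a run starting from a root state. -/
def TA.Accepts {Q σ C : Type} (A : TA Q σ C) (T : BTree σ C) : Prop :=
  ∃ q ∈ A.root, A.Reach q T


lemma reach_tag_eq {Q σ C : Type} (A : TA Q σ C)
    (hsym : ∀ d ∈ A.Δi, ∀ d' ∈ A.Δi, d.2.1 = d'.2.1 → d = d')
    (hleaf : ∀ p ∈ A.Δl, ∀ p' ∈ A.Δl, p.2 ≠ p'.2 → p.1 ≠ p'.1) :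
    ∀ (T T' : BTree σ C) (q : Q), T.tag = T'.tag →
      A.Reach q T → A.Reach q T' → T = T' := by
  intro T
  induction T with
  | leaf c =>
    intro T' q htag h h'
    cases T' with
    | leaf c' =>
      cases h with | leaf hm =>
      cases h' with | leaf hm' =>
      by_contra hne
      have : c ≠ c' := fun hc => hne (by rw [hc])
      exact hleaf (q, c) hm (q, c') hm' this rfl
    | node s' l' r' => simp [BTree.tag] at htag
  | node s l r ihl ihr =>
    intro T' q htag h h'
    cases T' with
    | leaf c' => simp [BTree.tag] at htag
    | node s' l' r' =>
      simp only [BTree.tag, BTree.node.injEq] at htag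
      obtain ⟨hs, hl, hr⟩ := htag
      cases h with | node hm hL hR =>
      cases h' with | @node _ a' b' _ _ _ hm' hL' hR' =>
      subst hs
      have heq := hsym _ hm _ hm' rfl
      simp only [Prod.mk.injEq] at heq
      obtain ⟨-, -, ha, hb⟩ := heq
      subst ha; subst hb
      rw [ihl l' _ hl hL hL', ihr r' _ hr hR hR']

theorem tagged_trees_unique {Q σ C : Type} (A : TA Q σ C)
    (hsym : ∀ d ∈ A.Δi, ∀ d' ∈ A.Δi, d.2.1 = d'.2.1 → d = d')
    (hleaf : ∀ p ∈ A.Δl, ∀ p' ∈ A.Δl, p.2 ≠ p'.2 → p.1 ≠ p'.1)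
    (T₁ T₂ : BTree σ C) (h₁ : A.Accepts T₁) (h₂ : A.Accepts T₂)
    (hs₁ : ¬ T₁.SingleValued) (hs₂ : ¬ T₂.SingleValued)
    (htag : T₁.tag = T₂.tag) : T₁ = T₂ := by
  obtain ⟨q₁, -, hr₁⟩ := h₁
  obtain ⟨q₂, -, hr₂⟩ := h₂
  cases T₁ with
  | leaf c => exact absurd ⟨c, by simp [BTree.leafSet]⟩ hs₁
  | node s l r =>
    cases T₂ with
    | leaf c' => exact absurd ⟨c', by simp [BTree.leafSet]⟩ hs₂
    | node s' l' r' =>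
      simp only [BTree.tag, BTree.node.injEq] at htag
      obtain ⟨hs, hl, hr⟩ := htag
      cases hr₁ with | node hm hL hR =>
      cases hr₂ with | @node _ a' b' _ _ _ hm' hL' hR' =>
      subst hs
      have heq := hsym _ hm _ hm' rfl
      simp only [Prod.mk.injEq] at heq
      obtain ⟨-, -, ha, hb⟩ := heq
      subst ha; subst hb
      rw [reach_tag_eq A hsym hleaf l l' _ hl hL hL',
          reach_tag_eq A hsym hleaf r r' _ hr hR hR']
end
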